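/- Let X be a complex Banach space and let P, Q be linear operators in X with equal domains D := D(P) = D(Q). Assume P and Q admit bounded two-sided inverses P⁻¹, Q⁻¹ : X → X with P⁻¹ ∘ Q⁻¹ = Q⁻¹ ∘ P⁻¹. Then for every ψ ∈ D one has: Pψ ∈ D if and only if Qψ ∈ D. In particular the domains of P², Q², PQ and QP all coincide: {ψ ∈ D : Pψ ∈ D} = {ψ ∈ D : Qψ ∈ D}. -/
import Mathlib

/-- if `P`, `Q` are linear operators in `X` with equal domain `D`,
admitting bounded two-sided inverses `P⁻¹`, `Q⁻¹` that commute, then for every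
`ψ ∈ D`: `Pψ ∈ D ↔ Qψ ∈ D`; in particular
`{ψ ∈ D : Pψ ∈ D} = {ψ ∈ D : Qψ ∈ D}`. -/
theorem stmt5 {X : Type*} [NormedAddCommGroup X] [NormedSpace ℂ X] [CompleteSpace X]
    (D : Submodule ℂ X)
    (P Q : D →ₗ[ℂ] X) (Pinv Qinv : X →L[ℂ] X)
    (hPmem : ∀ x : X, Pinv x ∈ D) (hQmem : ∀ x : X, Qinv x ∈ D)
    (hPright : ∀ x : X, P ⟨Pinv x, hPmem x⟩ = x)
    (hQright : ∀ x : X, Q ⟨Qinv x, hQmem x⟩ = x)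
    (hPleft : ∀ ψ : D, Pinv (P ψ) = (ψ : X))
    (hQleft : ∀ ψ : D, Qinv (Q ψ) = (ψ : X))
    (hinvcomm : ∀ x : X, Pinv (Qinv x) = Qinv (Pinv x)) :
    (∀ ψ : D, P ψ ∈ D ↔ Q ψ ∈ D) ∧
      {ψ : D | P ψ ∈ D} = {ψ : D | Q ψ ∈ D} := by
  have main : ∀ ψ : D, P ψ ∈ D ↔ Q ψ ∈ D := by
    intro ψ
    constructor
    · intro h
      set x := Q ⟨P ψ, h⟩ with hx
      have h1 : Qinv x = P ψ := hQleft ⟨P ψ, h⟩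
      have h2 : (ψ : X) = Qinv (Pinv x) := by
        rw [← hinvcomm, h1, hPleft]
      have hψ : ψ = ⟨Qinv (Pinv x), hQmem _⟩ := Subtype.ext h2
      have : Q ψ = Pinv x := by rw [hψ, hQright]
      rw [this]; exact hPmem _
    · intro h
      set x := P ⟨Q ψ, h⟩ with hx
      have h1 : Pinv x = Q ψ := hPleft ⟨Q ψ, h⟩
      have h2 : (ψ : X) = Pinv (Qinv x) := by
        rw [hinvcomm, h1, hQleft]
      have hψ : ψ = ⟨Pinv (Qinv x), hPmem _⟩ := Subtype.ext h2
      have : P ψ = Qinv x := by rw [hψ, hPright]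
      rw [this]; exact hQmem _
  exact ⟨main, Set.ext fun ψ => main ψ⟩
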